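/- arXiv:math/0511524 — 2 statements merged into one kernel-verified Lean document; each statement's English description precedes it below -/
import Mathlib

section
/- The map σ : 𝒟^N → 𝒟^N defined on basis elements by σ(t^i D^j A) = (−1)^{j+1} t^i (D+i)^j Aᵀ (for i∈ℤ, j∈ℤ≥0, A∈gl_N, where Aᵀ is the transpose of A) is an isomorphism of Lie algebras. -/
noncomputable section

open scoped BigOperators

attribute [local instance] LieRing.ofAssociativeRing

/-- The underlying space `ℂ^N[t,t⁻¹]`; the coefficient of `t^k` is stored at index `k`. -/
abbrev MN (N : ℕ) : Type := ℤ →₀ (Fin N → ℂ)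

/-- The operator `t^i D^j A` on `ℂ^N[t,t⁻¹]` (where `D = t d/dt`):
`t^i D^j A ⬝ (t^k v) = k^j t^{i+k} (A v)`.  This realizes `𝒟^N` faithfully as operators. -/
def gen (N : ℕ) (i : ℤ) (j : ℕ) (A : Matrix (Fin N) (Fin N) ℂ) : Module.End ℂ (MN N) :=
  Finsupp.lsum ℂ fun k : ℤ => (Finsupp.lsingle (k + i)) ∘ₗ (((k : ℂ) ^ j) • A.mulVecLin)

/-- `𝒟^N`, the Lie algebra of `N × N`-matrix differential operators on the circle, realized
as the Lie subalgebra of endomorphisms of `ℂ^N[t,t⁻¹]` generated (in fact spanned) by the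
operators `t^i D^j A`. -/
def DNlie (N : ℕ) : LieSubalgebra ℂ (Module.End ℂ (MN N)) :=
  LieSubalgebra.lieSpan ℂ (Module.End ℂ (MN N))
    {x | ∃ (i : ℤ) (j : ℕ) (A : Matrix (Fin N) (Fin N) ℂ), x = gen N i j A}

/-- The operator `(-1)^{j+1} t^i (D+i)^j Aᵀ`, the image of `t^i D^j A` under `σ`:
`t^k v ↦ (-1)^{j+1} (k+i)^j t^{k+i} (Aᵀ v)`. -/
def genSigma (N : ℕ) (i : ℤ) (j : ℕ) (A : Matrix (Fin N) (Fin N) ℂ) :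
    Module.End ℂ (MN N) :=
  Finsupp.lsum ℂ fun k : ℤ =>
    (Finsupp.lsingle (k + i)) ∘ₗ
      (((-1 : ℂ) ^ (j + 1) * ((k : ℂ) + (i : ℂ)) ^ j) • A.transpose.mulVecLin)

/-!
For the symmetric nondegenerate pairing `⟨t^k v, t^l w⟩ = δ_{k+l,0} v ⬝ᵥ w` on `ℂ^N[t,t⁻¹]`,
the adjoint of `t^i D^j A` is `-σ(t^i D^j A)`, since `D* = -D` and `(t^i)* = t^i`. Taking adjoints
reverses products, so `X ↦ -X*` preserves commutators, and it is an involution because the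
pairing is symmetric. Expanding `(D+i)^j` binomially puts the adjoints of the generators, hence of
all of `𝒟^N`, back in `𝒟^N`; so `σ = -(·)*` is a Lie automorphism of `𝒟^N`.
-/

open LinearMap (BilinForm IsAdjointPair)

namespace LinearMap

variable {R M : Type*} [CommRing R] [AddCommGroup M] [Module R M] {B : BilinForm R M}

theorem IsAdjointPair.neg {f g : M → M} (h : IsAdjointPair B B f g) :
    IsAdjointPair B B (-f) (-g) := fun x y => by
  simp only [Pi.neg_apply, map_neg, neg_apply, h x y]

theorem IsAdjointPair.lie {f g f' g' : Module.End R M} (h : IsAdjointPair B B f g)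
    (h' : IsAdjointPair B B f' g') : IsAdjointPair B B ⇑⁅f, f'⁆ ⇑⁅g', g⁆ := by
  rw [LieRing.of_associative_ring_bracket, LieRing.of_associative_ring_bracket]
  exact (h.mul h').sub (h'.mul h)

theorem BilinForm.IsSymm.isAdjointPair_symm (hB : B.IsSymm) {f g : M → M}
    (h : IsAdjointPair B B f g) : IsAdjointPair B B g f := fun x y => by
  rw [hB.eq, ← h, hB.eq]

theorem IsAdjointPair.right_unique (hB : B.SeparatingRight) {f g g' : Module.End R M}
    (h : IsAdjointPair B B f g) (h' : IsAdjointPair B B f g') : g = g' := by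
  ext y
  refine sub_eq_zero.mp (hB _ fun x => ?_)
  rw [map_sub, ← h, ← h', sub_self]

end LinearMap

namespace LinearMap.BilinForm

variable {R M : Type*} [CommRing R] [AddCommGroup M] [Module R M] {B : BilinForm R M}

variable (B) in
def adjointableLieSubalgebra (L : LieSubalgebra R (Module.End R M)) :
    LieSubalgebra R (Module.End R M) where
  carrier := {f | f ∈ L ∧ ∃ g ∈ L, IsAdjointPair B B f g}
  add_mem' := by
    rintro f f' ⟨hf, g, hg, h⟩ ⟨hf', g', hg', h'⟩
    exact ⟨add_mem hf hf', g + g', add_mem hg hg', h.add h'⟩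
  zero_mem' := ⟨zero_mem L, 0, zero_mem L, isAdjointPair_zero⟩
  smul_mem' := by
    rintro c f ⟨hf, g, hg, h⟩
    exact ⟨L.smul_mem c hf, c • g, L.smul_mem c hg, h.smul c⟩
  lie_mem' := by
    rintro f f' ⟨hf, g, hg, h⟩ ⟨hf', g', hg', h'⟩
    exact ⟨L.lie_mem hf hf', ⁅g', g⁆, L.lie_mem hg' hg, h.lie h'⟩

section AdjointIn

variable {L : LieSubalgebra R (Module.End R M)} (hL : ∀ f ∈ L, ∃ g ∈ L, IsAdjointPair B B f g)

def adjointIn (f : L) : Module.End R M := (hL f f.2).choose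

theorem adjointIn_mem (f : L) : adjointIn hL f ∈ L := (hL f f.2).choose_spec.1

theorem isAdjointPair_adjointIn (f : L) :
    IsAdjointPair B B (f : Module.End R M) (adjointIn hL f) :=
  (hL f f.2).choose_spec.2

variable {hL}

theorem adjointIn_eq (hB : B.SeparatingRight) {f : L} {g : Module.End R M}
    (h : IsAdjointPair B B (f : Module.End R M) g) : adjointIn hL f = g :=
  (isAdjointPair_adjointIn hL f).right_unique hB h

variable (hL)

def negAdjoint (f : L) : L := ⟨-adjointIn hL f, neg_mem (adjointIn_mem hL f)⟩

theorem negAdjoint_negAdjoint (hB : B.IsSymm) (hB' : B.SeparatingRight) (f : L) :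
    negAdjoint hL (negAdjoint hL f) = f := by
  refine Subtype.ext (neg_eq_iff_eq_neg.mpr (adjointIn_eq hB' ?_))
  exact (hB.isAdjointPair_symm (isAdjointPair_adjointIn hL f)).neg

def negAdjointLieEquiv (hB : B.IsSymm) (hB' : B.SeparatingRight) : L ≃ₗ⁅R⁆ L where
  toFun := negAdjoint hL
  invFun := negAdjoint hL
  map_add' f f' := Subtype.ext <| by
    change -adjointIn hL (f + f') = -adjointIn hL f + -adjointIn hL f'
    rw [adjointIn_eq hB' (g := adjointIn hL f + adjointIn hL f')
      ((isAdjointPair_adjointIn hL f).add (isAdjointPair_adjointIn hL f')), neg_add]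
  map_smul' c f := Subtype.ext <| by
    change -adjointIn hL (c • f) = c • -adjointIn hL f
    rw [adjointIn_eq hB' (g := c • adjointIn hL f) ((isAdjointPair_adjointIn hL f).smul c),
      smul_neg]
  map_lie' {f f'} := Subtype.ext <| by
    change -adjointIn hL ⁅f, f'⁆ = ⁅-adjointIn hL f, -adjointIn hL f'⁆
    rw [adjointIn_eq hB' ((isAdjointPair_adjointIn hL f).lie (isAdjointPair_adjointIn hL f')),
      neg_lie, lie_neg, neg_neg, lie_skew]
  left_inv := negAdjoint_negAdjoint hL hB hB'
  right_inv := negAdjoint_negAdjoint hL hB hB'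

theorem coe_negAdjointLieEquiv_apply (hB : B.IsSymm) (hB' : B.SeparatingRight) {f : L}
    {g : Module.End R M} (h : IsAdjointPair B B (f : Module.End R M) g) :
    (negAdjointLieEquiv hL hB hB' f : Module.End R M) = -g :=
  congrArg Neg.neg (adjointIn_eq hB' h)

end AdjointIn

end LinearMap.BilinForm

open Finsupp LinearMap.BilinForm
open scoped Matrix

section DifferentialOperators

variable {N : ℕ}

@[simp]
theorem gen_single (i : ℤ) (j : ℕ) (A : Matrix (Fin N) (Fin N) ℂ) (k : ℤ) (v : Fin N → ℂ) :
    gen N i j A (single k v) = single (k + i) ((k : ℂ) ^ j • (A *ᵥ v)) := by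
  simp only [gen, lsum_single, LinearMap.comp_apply, LinearMap.smul_apply,
    Matrix.mulVecLin_apply, lsingle_apply]

@[simp]
theorem genSigma_single (i : ℤ) (j : ℕ) (A : Matrix (Fin N) (Fin N) ℂ) (k : ℤ) (v : Fin N → ℂ) :
    genSigma N i j A (single k v)
      = single (k + i) (((-1 : ℂ) ^ (j + 1) * ((k : ℂ) + i) ^ j) • (Aᵀ *ᵥ v)) := by
  simp only [genSigma, lsum_single, LinearMap.comp_apply, LinearMap.smul_apply,
    Matrix.mulVecLin_apply, lsingle_apply]

theorem gen_mem_DNlie (i : ℤ) (j : ℕ) (A : Matrix (Fin N) (Fin N) ℂ) : gen N i j A ∈ DNlie N :=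
  LieSubalgebra.subset_lieSpan ⟨i, j, A, rfl⟩

theorem genSigma_eq_sum (i : ℤ) (j : ℕ) (A : Matrix (Fin N) (Fin N) ℂ) :
    genSigma N i j A = ∑ m ∈ Finset.range (j + 1),
      ((-1 : ℂ) ^ (j + 1) * j.choose m * (i : ℂ) ^ (j - m)) • gen N i m Aᵀ := by
  refine Finsupp.lhom_ext fun k v => ?_
  simp only [genSigma_single, LinearMap.sum_apply, LinearMap.smul_apply, gen_single,
    smul_single, smul_smul, ← single_finsetSum, ← Finset.sum_smul]
  rw [add_pow, Finset.mul_sum]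
  congr 2
  exact Finset.sum_congr rfl fun m _ => by ring

theorem genSigma_mem_DNlie (i : ℤ) (j : ℕ) (A : Matrix (Fin N) (Fin N) ℂ) :
    genSigma N i j A ∈ DNlie N := by
  rw [genSigma_eq_sum]
  exact (DNlie N).toSubmodule.sum_mem fun m _ => (DNlie N).smul_mem _ (gen_mem_DNlie i m Aᵀ)

variable (N) in
/-- `⟨f, g⟩` is the constant term of the Laurent polynomial `f ⬝ᵥ g`. -/
def residuePairing : BilinForm ℂ (MN N) :=
  Finsupp.lsum ℂ fun k => (dotProductBilin ℂ ℂ).compl₂ (Finsupp.lapply (-k))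

@[simp]
theorem residuePairing_single (k : ℤ) (v : Fin N → ℂ) (g : MN N) :
    residuePairing N (single k v) g = v ⬝ᵥ g (-k) := by
  simp [residuePairing]

theorem residuePairing_single_single (k l : ℤ) (v w : Fin N → ℂ) :
    residuePairing N (single k v) (single l w) = if k + l = 0 then v ⬝ᵥ w else 0 := by
  rw [residuePairing_single, single_apply]
  by_cases h : k + l = 0
  · rw [if_pos (by omega), if_pos h]
  · rw [if_neg (by omega), if_neg h, dotProduct_zero]

theorem residuePairing_isSymm : (residuePairing N).IsSymm := by
  refine isSymm_iff_flip.mpr (Finsupp.lhom_ext fun k v => Finsupp.lhom_ext fun l w => ?_)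
  rw [LinearMap.BilinForm.flip_apply, residuePairing_single_single,
    residuePairing_single_single, add_comm, dotProduct_comm]

theorem residuePairing_separatingRight : (residuePairing N).SeparatingRight := by
  intro g hg
  ext k a
  simpa using hg (single (-k) (Pi.single a 1))

theorem isAdjointPair_gen_genSigma (i : ℤ) (j : ℕ) (A : Matrix (Fin N) (Fin N) ℂ) :
    IsAdjointPair (residuePairing N) (residuePairing N) (gen N i j A)
      ⇑(-genSigma N i j A) := by
  rw [LinearMap.isAdjointPair_iff_comp_eq_compl₂]
  refine Finsupp.lhom_ext fun k v => Finsupp.lhom_ext fun l w => ?_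
  simp only [LinearMap.compl₂_apply, LinearMap.comp_apply, gen_single, LinearMap.neg_apply,
    genSigma_single, ← single_neg, residuePairing_single_single]
  by_cases h : k + i + l = 0
  · have hl : (l : ℂ) + i = -k := by exact_mod_cast (show l + i = -k by omega)
    rw [if_pos h, if_pos (by omega), hl, smul_dotProduct, dotProduct_neg, dotProduct_smul,
      Matrix.dotProduct_mulVec, Matrix.vecMul_transpose, smul_eq_mul, smul_eq_mul, ← neg_mul]
    have hsign : (-1 : ℂ) ^ (j + 1) * (-1) ^ j = -1 := by
      rw [← pow_add, Odd.neg_one_pow ⟨j, by ring⟩]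
    rw [neg_pow (k : ℂ), ← mul_assoc, hsign]
    ring
  · rw [if_neg h, if_neg (by omega)]

theorem exists_isAdjointPair_of_mem_DNlie :
    ∀ f ∈ DNlie N, ∃ g ∈ DNlie N, IsAdjointPair (residuePairing N) (residuePairing N) f g := by
  suffices DNlie N ≤ adjointableLieSubalgebra (residuePairing N) (DNlie N) from
    fun f hf => (this hf).2
  refine LieSubalgebra.lieSpan_le.mpr ?_
  rintro _ ⟨i, j, A, rfl⟩
  exact ⟨gen_mem_DNlie i j A, _, neg_mem (genSigma_mem_DNlie i j A),
    isAdjointPair_gen_genSigma i j A⟩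

end DifferentialOperators

theorem sigma_lie_isomorphism_general (N : ℕ) :
    ∃ σ : DNlie N ≃ₗ⁅ℂ⁆ DNlie N,
      ∀ (i : ℤ) (j : ℕ) (A : Matrix (Fin N) (Fin N) ℂ) (h : gen N i j A ∈ DNlie N),
        ((σ ⟨gen N i j A, h⟩ : DNlie N) : Module.End ℂ (MN N)) = genSigma N i j A := by
  refine ⟨negAdjointLieEquiv exists_isAdjointPair_of_mem_DNlie residuePairing_isSymm
    residuePairing_separatingRight, fun i j A _ => ?_⟩
  exact (coe_negAdjointLieEquiv_apply _ _ _ (isAdjointPair_gen_genSigma i j A)).trans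
    (neg_neg (genSigma N i j A))

/-- The map `σ : 𝒟^N → 𝒟^N`, `σ(t^i D^j A) = (-1)^{j+1} t^i (D+i)^j Aᵀ`, is an isomorphism
of Lie algebras. -/
theorem sigma_lie_isomorphism (N : ℕ) (hN : 1 ≤ N) :
    ∃ σ : DNlie N ≃ₗ⁅ℂ⁆ DNlie N,
      ∀ (i : ℤ) (j : ℕ) (A : Matrix (Fin N) (Fin N) ℂ) (h : gen N i j A ∈ DNlie N),
        ((σ ⟨gen N i j A, h⟩ : DNlie N) : Module.End ℂ (MN N)) = genSigma N i j A :=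
  sigma_lie_isomorphism_general N
end
end

section
/- Let V be a quasifinite 𝒟̂^N-module and let ℋ = span{C, D, E_{1,1}, …, E_{N,N}} be the Cartan subalgebra of 𝒟̂^N, where D is the element t⁰D¹I and E_{p,p} = t⁰D⁰E_{p,p}. Then the span V′ of all common eigenvectors of ℋ in V is a 𝒟̂^N-submodule of V, and V′ ≠ 0. Consequently, every irreducible quasifinite 𝒟̂^N-module is a weight module, i.e. the actions of all elements of ℋ on it are simultaneously diagonalizable. -/
noncomputable section

open scoped BigOperators

/-- Falling factorial `[b]_s = b(b-1)⋯(b-s+1)` of an integer `b`. -/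
def dfall (b : ℤ) (s : ℕ) : ℤ := ∏ i ∈ Finset.range s, (b - (i : ℤ))

/-- Generalized binomial coefficient `binom(a, n)` as a complex number, for `a : ℤ`, `n : ℕ`. -/
def cbinom (a : ℤ) (n : ℕ) : ℂ :=
  (∏ i ∈ Finset.range n, ((a : ℂ) - (i : ℂ))) / (n.factorial : ℂ)

/-- The coefficient `δ_{i,-k} (-1)^j j! l! binom(i+j, j+l+1)` of the central element in the
bracket of `t^a (d/dt)^j A = t^i [D]_j A` (with `a = i + j`) and `t^b (d/dt)^l B = t^k [D]_l B`
(with `b = k + l`); it is still to be multiplied by `tr (AB)`. -/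
def cocycleCoeff (a : ℤ) (j : ℕ) (b : ℤ) (l : ℕ) : ℂ :=
  if a + b = (j : ℤ) + (l : ℤ) then
    (-1 : ℂ) ^ j * (j.factorial : ℂ) * (l.factorial : ℂ) * cbinom a (j + l + 1)
  else 0

/-- A module over the universal central extension `𝒟̂^N` of the Lie algebra of `N × N`-matrix
differential operators on the circle, presented through the action `ρ a j A` of the basis
elements `t^a (d/dt)^j A = t^{a-j} [D]_j A` (`a ∈ ℤ`, `j ∈ ℕ`, `A ∈ gl_N(ℂ)`) together with the
action `cC` of the central element `C`, subject to bilinearity in `A` and the commutation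
relations (2.3)/(3.12) of the paper. -/
structure DhatModule (N : ℕ) (V : Type*) [AddCommGroup V] [Module ℂ V] where
  ρ : ℤ → ℕ → Matrix (Fin N) (Fin N) ℂ → Module.End ℂ V
  cC : Module.End ℂ V
  ρ_add : ∀ a j A B, ρ a j (A + B) = ρ a j A + ρ a j B
  ρ_smul : ∀ a j (c : ℂ) A, ρ a j (c • A) = c • ρ a j A
  cC_comm : ∀ a j A, cC * ρ a j A = ρ a j A * cC
  bracket_rel : ∀ (a : ℤ) (j : ℕ) (A : Matrix (Fin N) (Fin N) ℂ) (b : ℤ) (l : ℕ)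
      (B : Matrix (Fin N) (Fin N) ℂ),
    ρ a j A * ρ b l B - ρ b l B * ρ a j A =
      ((∑ s ∈ Finset.range (j + 1),
        ((j.choose s : ℂ) * (dfall b s : ℂ)) • ρ (a + b - (s : ℤ)) (j + l - s) (A * B))
      - (∑ s ∈ Finset.range (l + 1),
        ((l.choose s : ℂ) * (dfall a s : ℂ)) • ρ (a + b - (s : ℤ)) (j + l - s) (B * A)))
      + (cocycleCoeff a j b l * (A * B).trace) • cC

namespace DhatModule

variable {N : ℕ} {V : Type*} [AddCommGroup V] [Module ℂ V]

/-- A subspace invariant under the `𝒟̂^N`-action. -/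
def IsSub (M : DhatModule N V) (U : Submodule ℂ V) : Prop :=
  (∀ a j A, ∀ v ∈ U, M.ρ a j A v ∈ U) ∧ ∀ v ∈ U, M.cC v ∈ U

/-- The module is trivial: `𝒟̂^N` acts by zero. -/
def IsTrivial (M : DhatModule N V) : Prop :=
  (∀ a j A (v : V), M.ρ a j A v = 0) ∧ ∀ v : V, M.cC v = 0

/-- Irreducibility: the module is nonzero and has no invariant subspace besides `⊥` and `⊤`. -/
def IsIrreducible (M : DhatModule N V) : Prop :=
  (⊥ : Submodule ℂ V) ≠ ⊤ ∧ ∀ U : Submodule ℂ V, M.IsSub U → U = ⊥ ∨ U = ⊤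

/-- Indecomposability: the module is nonzero and is not the direct sum of two nonzero
invariant subspaces. -/
def IsIndecomposable (M : DhatModule N V) : Prop :=
  (⊥ : Submodule ℂ V) ≠ ⊤ ∧ ∀ U W : Submodule ℂ V, M.IsSub U → M.IsSub W →
    U ⊓ W = ⊥ → U ⊔ W = ⊤ → U = ⊥ ∨ W = ⊥

end DhatModule

/-- The degree of the basis element `t^a (d/dt)^j E_{p,q} = t^{a-j} [D]_j E_{p,q}` in the
principal `ℤ`-gradation of `𝒟̂^N`, namely `(a - j) N + p - q` (here `p, q ∈ Fin N` correspond
to `p+1, q+1 ∈ [1,N]`). -/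
def gdeg (N : ℕ) (a : ℤ) (j : ℕ) (p q : Fin N) : ℤ :=
  (a - (j : ℤ)) * (N : ℤ) + (p.val : ℤ) - (q.val : ℤ)

/-- A `ℤ`-graded `𝒟̂^N`-module, graded compatibly with the principal gradation of `𝒟̂^N`. -/
structure GradedDhatModule (N : ℕ) (V : Type*) [AddCommGroup V] [Module ℂ V]
    extends DhatModule N V where
  grade : ℤ → Submodule ℂ V
  isInternal : DirectSum.IsInternal grade
  grade_ρ : ∀ (a : ℤ) (j : ℕ) (p q : Fin N) (d : ℤ), ∀ v ∈ grade d,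
    ρ a j (Matrix.single p q 1) v ∈ grade (d + gdeg N a j p q)
  grade_cC : ∀ (d : ℤ), ∀ v ∈ grade d, cC v ∈ grade d

namespace GradedDhatModule

variable {N : ℕ} {V : Type*} [AddCommGroup V] [Module ℂ V]

/-- Quasifiniteness: every graded component is finite-dimensional. -/
def IsQuasifinite (G : GradedDhatModule N V) : Prop :=
  ∀ d : ℤ, FiniteDimensional ℂ (G.grade d)

/-- Uniformly bounded: the dimensions of the graded components are uniformly bounded. -/
def IsUniformlyBounded (G : GradedDhatModule N V) : Prop :=
  ∃ K : ℕ, ∀ d : ℤ, Module.rank ℂ (G.grade d) ≤ (K : Cardinal)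

/-- Module of the intermediate series: all graded components have dimension at most `1`. -/
def IsIntermediateSeries (G : GradedDhatModule N V) : Prop :=
  ∀ d : ℤ, Module.rank ℂ (G.grade d) ≤ 1

/-- A highest weight vector: homogeneous, nonzero, with `(𝒟̂^N)₀ v ⊆ ℂ v` and
`(𝒟̂^N)₊ v = 0`. -/
def IsHWVector (G : GradedDhatModule N V) (v : V) : Prop :=
  v ≠ 0 ∧ (∃ d : ℤ, v ∈ G.grade d) ∧
  (∀ (a : ℤ) (j : ℕ) (p q : Fin N), gdeg N a j p q = 0 →
    ∃ c : ℂ, G.ρ a j (Matrix.single p q 1) v = c • v) ∧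
  (∃ c : ℂ, G.cC v = c • v) ∧
  (∀ (a : ℤ) (j : ℕ) (p q : Fin N), 0 < gdeg N a j p q →
    G.ρ a j (Matrix.single p q 1) v = 0)

/-- A lowest weight vector: homogeneous, nonzero, with `(𝒟̂^N)₀ v ⊆ ℂ v` and
`(𝒟̂^N)₋ v = 0`. -/
def IsLWVector (G : GradedDhatModule N V) (v : V) : Prop :=
  v ≠ 0 ∧ (∃ d : ℤ, v ∈ G.grade d) ∧
  (∀ (a : ℤ) (j : ℕ) (p q : Fin N), gdeg N a j p q = 0 →
    ∃ c : ℂ, G.ρ a j (Matrix.single p q 1) v = c • v) ∧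
  (∃ c : ℂ, G.cC v = c • v) ∧
  (∀ (a : ℤ) (j : ℕ) (p q : Fin N), gdeg N a j p q < 0 →
    G.ρ a j (Matrix.single p q 1) v = 0)

/-- A highest weight module: generated by a highest weight vector. -/
def IsHWModule (G : GradedDhatModule N V) : Prop :=
  ∃ v : V, G.IsHWVector v ∧
    ∀ U : Submodule ℂ V, G.toDhatModule.IsSub U → v ∈ U → U = ⊤

/-- A lowest weight module: generated by a lowest weight vector. -/
def IsLWModule (G : GradedDhatModule N V) : Prop :=
  ∃ v : V, G.IsLWVector v ∧
    ∀ U : Submodule ℂ V, G.toDhatModule.IsSub U → v ∈ U → U = ⊤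

end GradedDhatModule

/-- The set of common eigenvectors in `V` of the Cartan subalgebra
`ℋ = span{C, D, E_{1,1}, …, E_{N,N}}` of `𝒟̂^N` (here `D = t⁰D¹I = t¹(d/dt)¹ I`). -/
def weightVectors {N : ℕ} {V : Type*} [AddCommGroup V] [Module ℂ V]
    (G : GradedDhatModule N V) : Set V :=
  {v | (∃ c : ℂ, G.cC v = c • v) ∧ (∃ c : ℂ, G.ρ 1 1 1 v = c • v) ∧
    ∀ p : Fin N, ∃ c : ℂ, G.ρ 0 0 (Matrix.single p p 1) v = c • v}

section Aux

universe u

open Matrix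

@[simp] lemma dfall_zero' (b : ℤ) : dfall b 0 = 1 := by simp [dfall]

@[simp] lemma dfall_one' (b : ℤ) : dfall b 1 = b := by simp [dfall]

lemma dfall_one_eq_zero {s : ℕ} (hs : 2 ≤ s) : dfall 1 s = 0 :=
  Finset.prod_eq_zero (Finset.mem_range.mpr (by omega : (1:ℕ) < s)) (by norm_num)

lemma dfall_zero_eq_zero {s : ℕ} (hs : 1 ≤ s) : dfall 0 s = 0 :=
  Finset.prod_eq_zero (Finset.mem_range.mpr (by omega : (0:ℕ) < s)) (by norm_num)

lemma cbinom_zero_succ (n : ℕ) : cbinom 0 (n + 1) = 0 := by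
  unfold cbinom
  rw [Finset.prod_eq_zero (Finset.mem_range.mpr (by omega : (0:ℕ) < n + 1)) (by norm_num)]
  simp

lemma cbinom_one_succ_succ (n : ℕ) : cbinom 1 (n + 2) = 0 := by
  unfold cbinom
  rw [Finset.prod_eq_zero (Finset.mem_range.mpr (by omega : (1:ℕ) < n + 2)) (by norm_num)]
  simp

lemma cocycle_11 (a : ℤ) (j : ℕ) : cocycleCoeff 1 1 a j = 0 := by
  unfold cocycleCoeff
  rw [show (1:ℕ) + j + 1 = j + 2 by omega, cbinom_one_succ_succ]
  simp

lemma cocycle_00 (a : ℤ) (j : ℕ) : cocycleCoeff 0 0 a j = 0 := by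
  unfold cocycleCoeff
  rw [show (0:ℕ) + j + 1 = j + 1 by omega, cbinom_zero_succ]
  simp

namespace DhatModule

variable {N : ℕ} {V : Type*} [AddCommGroup V] [Module ℂ V]

lemma ρ_zero (M : DhatModule N V) (a : ℤ) (j : ℕ) : M.ρ a j 0 = 0 := by
  have := M.ρ_smul a j 0 0
  simpa using this

/-- `ρ a j` as a linear map in the matrix argument. -/
def ρL (M : DhatModule N V) (a : ℤ) (j : ℕ) :
    Matrix (Fin N) (Fin N) ℂ →ₗ[ℂ] Module.End ℂ V where
  toFun := M.ρ a j
  map_add' := M.ρ_add a j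
  map_smul' := M.ρ_smul a j

lemma sum_dfall1 (g : ℕ → Module.End ℂ V) (j : ℕ) :
    ∑ s ∈ Finset.range (j + 1), ((j.choose s : ℂ) * ((dfall 1 s : ℤ) : ℂ)) • g s
      = g 0 + (j : ℂ) • g 1 := by
  rcases j with _ | m
  · simp
  · rw [← Finset.sum_subset (Finset.range_subset_range.mpr (by omega : 2 ≤ m + 1 + 1))
      (fun x _ hx => by
        rw [Finset.mem_range] at hx
        rw [dfall_one_eq_zero (by omega)]
        simp)]
    rw [Finset.sum_range_succ, Finset.sum_range_one]
    simp

lemma sum_dfall0 (g : ℕ → Module.End ℂ V) (j : ℕ) :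
    ∑ s ∈ Finset.range (j + 1), ((j.choose s : ℂ) * ((dfall 0 s : ℤ) : ℂ)) • g s = g 0 := by
  rw [← Finset.sum_subset (Finset.range_subset_range.mpr (by omega : 1 ≤ j + 1))
    (fun x _ hx => by
      rw [Finset.mem_range] at hx
      rw [dfall_zero_eq_zero (by omega)]
      simp)]
  simp

/-- Commutator of `D = t⁰D¹I` with `t^a (d/dt)^j A`. -/
lemma commD (M : DhatModule N V) (a : ℤ) (j : ℕ) (A : Matrix (Fin N) (Fin N) ℂ) :
    M.ρ 1 1 1 * M.ρ a j A - M.ρ a j A * M.ρ 1 1 1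
      = (((a : ℂ) - (j : ℂ)) • M.ρ a j A) := by
  have h := M.bracket_rel 1 1 1 a j A
  rw [cocycle_11] at h
  rw [sum_dfall1 (fun s => M.ρ (1 + a - s) (1 + j - s) (A * 1)) j] at h
  rw [Finset.sum_range_succ, Finset.sum_range_one] at h
  norm_num at h
  rw [h]
  module

/-- Commutator of `E_rr` with `t^a (d/dt)^j E_pq`. -/
lemma commE (M : DhatModule N V) (a : ℤ) (j : ℕ) (r p q : Fin N) :
    M.ρ 0 0 (single r r 1) * M.ρ a j (single p q 1)
      - M.ρ a j (single p q 1) * M.ρ 0 0 (single r r 1)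
      = (((if r = p then 1 else 0) - (if r = q then 1 else 0) : ℂ))
          • M.ρ a j (single p q 1) := by
  have h := M.bracket_rel 0 0 (single r r 1) a j (single p q 1)
  rw [cocycle_00] at h
  rw [sum_dfall0
    (fun s => M.ρ (0 + a - s) (0 + j - s) (single p q 1 * single r r 1)) j] at h
  rw [Finset.sum_range_one] at h
  norm_num at h
  rw [h]
  have h1 : M.ρ a j (single r r 1 * single p q 1)
      = (if r = p then (1:ℂ) else 0) • M.ρ a j (single p q 1) := by
    by_cases hrp : r = p
    · subst hrp; rw [Matrix.single_mul_single_same]; simp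
    · rw [Matrix.single_mul_single_of_ne (h := hrp), M.ρ_zero]; simp [hrp]
  have h2 : M.ρ a j (single p q 1 * single r r 1)
      = (if r = q then (1:ℂ) else 0) • M.ρ a j (single p q 1) := by
    by_cases hqr : q = r
    · subst hqr; rw [Matrix.single_mul_single_same]; simp
    · rw [Matrix.single_mul_single_of_ne (h := hqr), M.ρ_zero]
      have hrq : r ≠ q := fun hh => hqr hh.symm
      simp [hrq]
  rw [h1, h2]
  module

lemma commute_cC (M : DhatModule N V) (a : ℤ) (j : ℕ) (A : Matrix (Fin N) (Fin N) ℂ) :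
    Commute M.cC (M.ρ a j A) := M.cC_comm a j A

lemma commute_D_ρ00 (M : DhatModule N V) (A : Matrix (Fin N) (Fin N) ℂ) :
    Commute (M.ρ 1 1 1) (M.ρ 0 0 A) := by
  have h := M.commD 0 0 A
  norm_num at h
  exact sub_eq_zero.mp h

lemma commute_E_E (M : DhatModule N V) (p q : Fin N) :
    Commute (M.ρ 0 0 (single p p 1)) (M.ρ 0 0 (single q q 1)) := by
  have h := M.commE 0 0 p q q
  rw [sub_self, zero_smul] at h
  exact sub_eq_zero.mp h

lemma ρ_matrix_sum (M : DhatModule N V) (a : ℤ) (j : ℕ) (A : Matrix (Fin N) (Fin N) ℂ) :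
    M.ρ a j A = ∑ p, ∑ q, A p q • M.ρ a j (single p q 1) := by
  have : M.ρL a j A = ∑ p, ∑ q, A p q • M.ρL a j (single p q 1) := by
    conv_lhs => rw [Matrix.matrix_eq_sum_single A]
    rw [map_sum]
    refine Finset.sum_congr rfl fun p _ => ?_
    rw [map_sum]
    refine Finset.sum_congr rfl fun q _ => ?_
    rw [show single p q (A p q) = A p q • single p q (1:ℂ) by
      rw [Matrix.smul_single]; norm_num]
    exact _root_.map_smul _ _ _
  exact this

end DhatModule

lemma one_matrix_eq_sum (N : ℕ) :
    (1 : Matrix (Fin N) (Fin N) ℂ) = ∑ p, Matrix.single p p (1:ℂ) := by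
  ext i j
  by_cases h : i = j
  · subst h; simp [Matrix.sum_apply, Matrix.single, Matrix.one_apply]
  · rw [Matrix.one_apply_ne h, Matrix.sum_apply]
    refine (Finset.sum_eq_zero fun p _ => ?_).symm
    apply Matrix.single_apply_of_ne
    rintro ⟨rfl, rfl⟩
    exact h rfl

lemma restrict_commute {W : Type u} [AddCommGroup W] [Module ℂ W] {U : Submodule ℂ W}
    {f g : Module.End ℂ W} (h : Commute f g) (hf : ∀ x ∈ U, f x ∈ U) (hg : ∀ x ∈ U, g x ∈ U) :
    Commute (f.restrict hf) (g.restrict hg) := by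
  ext x
  have h' := LinearMap.congr_fun h.eq (x : W)
  simp only [Module.End.mul_apply] at h'
  simp only [Module.End.mul_apply, LinearMap.restrict_coe_apply]
  exact h'

lemma exists_common_eigen (n : ℕ) :
    ∀ (W : Type u) [AddCommGroup W] [Module ℂ W] [FiniteDimensional ℂ W] [Nontrivial W]
      (fs : Fin n → Module.End ℂ W), (∀ i i', Commute (fs i) (fs i')) →
      ∃ v : W, v ≠ 0 ∧ ∀ i, ∃ c : ℂ, fs i v = c • v := by
  induction n with
  | zero =>
    intro W _ _ _ _ fs _
    obtain ⟨v, hv⟩ := exists_ne (0 : W)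
    exact ⟨v, hv, fun i => i.elim0⟩
  | succ n ih =>
    intro W _ _ _ _ fs hc
    obtain ⟨μ, hμ⟩ := Module.End.exists_eigenvalue (fs 0)
    obtain ⟨v0, hv0⟩ := hμ.exists_hasEigenvector
    set E := (fs 0).eigenspace μ with hE
    have hEnt : Nontrivial E :=
      nontrivial_of_ne ⟨v0, hv0.1⟩ 0 (fun h => hv0.2 (congrArg Subtype.val h))
    have hinv : ∀ i : Fin n, ∀ x ∈ E, fs i.succ x ∈ E := by
      intro i x hx
      rw [hE, Module.End.mem_eigenspace_iff] at hx ⊢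
      calc fs 0 (fs i.succ x) = (fs 0 * fs i.succ) x := rfl
        _ = (fs i.succ * fs 0) x := by rw [(hc 0 i.succ).eq]
        _ = fs i.succ (fs 0 x) := rfl
        _ = μ • fs i.succ x := by rw [hx, _root_.map_smul]
    obtain ⟨v, hv, heig⟩ := ih E (fun i => (fs i.succ).restrict (hinv i))
      (fun i i' => restrict_commute (hc i.succ i'.succ) (hinv i) (hinv i'))
    refine ⟨(v : W), fun h => hv (Subtype.ext h), ?_⟩
    intro i
    refine Fin.cases ?_ (fun i => ?_) i
    · exact ⟨μ, Module.End.mem_eigenspace_iff.mp v.2⟩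
    · obtain ⟨c, hc'⟩ := heig i
      refine ⟨c, ?_⟩
      have := congrArg Subtype.val hc'
      simpa [LinearMap.restrict_coe_apply] using this

end Aux

/-- For a (nonzero) quasifinite `𝒟̂^N`-module `V`, the span `V'` of the common eigenvectors
of the Cartan subalgebra `ℋ` is a nonzero `𝒟̂^N`-submodule of `V`.  Consequently every
irreducible quasifinite `𝒟̂^N`-module is a weight module: it is spanned by common
eigenvectors of `ℋ`, i.e. the actions of the elements of `ℋ` are simultaneously
diagonalizable. -/
theorem weight_vectors_span_submodule (N : ℕ) (hN : 1 ≤ N)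
    (V : Type*) [AddCommGroup V] [Module ℂ V] [Nontrivial V]
    (G : GradedDhatModule N V) (hqf : G.IsQuasifinite) :
    G.toDhatModule.IsSub (Submodule.span ℂ (weightVectors G)) ∧
    Submodule.span ℂ (weightVectors G) ≠ ⊥ ∧
    (G.toDhatModule.IsIrreducible → Submodule.span ℂ (weightVectors G) = ⊤) := by
  classical
  set S : Set V := weightVectors G with hS
  -- Step 1: `ρ a j E_pq` maps weight vectors to weight vectors.
  have hstep : ∀ (a : ℤ) (j : ℕ) (p q : Fin N), ∀ v ∈ S,
      G.ρ a j (Matrix.single p q 1) v ∈ S := by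
    intro a j p q v hv
    obtain ⟨⟨c0, h0⟩, ⟨c1, h1⟩, hE⟩ := hv
    refine ⟨⟨c0, ?_⟩, ⟨c1 + ((a : ℂ) - (j : ℂ)), ?_⟩, fun r => ?_⟩
    · have hc := LinearMap.congr_fun (G.cC_comm a j (Matrix.single p q 1)) v
      simp only [Module.End.mul_apply] at hc
      rw [hc, h0, _root_.map_smul]
    · have hD := LinearMap.congr_fun (G.toDhatModule.commD a j (Matrix.single p q 1)) v
      simp only [LinearMap.sub_apply, Module.End.mul_apply, LinearMap.smul_apply] at hD
      have h2 := eq_add_of_sub_eq hD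
      rw [h1, _root_.map_smul] at h2
      rw [h2]
      module
    · obtain ⟨cr, hr⟩ := hE r
      refine ⟨cr + (((if r = p then 1 else 0) : ℂ) - ((if r = q then 1 else 0) : ℂ)), ?_⟩
      have hEc := LinearMap.congr_fun (G.toDhatModule.commE a j r p q) v
      simp only [LinearMap.sub_apply, Module.End.mul_apply, LinearMap.smul_apply] at hEc
      have h2 := eq_add_of_sub_eq hEc
      rw [hr, _root_.map_smul] at h2
      rw [h2]
      module
  -- Step 2: span of weight vectors is a submodule.
  have hsub : G.toDhatModule.IsSub (Submodule.span ℂ S) := by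
    constructor
    · intro a j A v hv
      have hle : Submodule.map (G.ρ a j A) (Submodule.span ℂ S) ≤ Submodule.span ℂ S := by
        rw [Submodule.map_span]
        refine Submodule.span_le.mpr ?_
        rintro y ⟨w, hw, rfl⟩
        have hexp : G.ρ a j A w
            = ∑ p, ∑ q, A p q • G.ρ a j (Matrix.single p q 1) w := by
          rw [G.toDhatModule.ρ_matrix_sum a j A]
          simp [LinearMap.sum_apply, LinearMap.smul_apply]
        rw [hexp]
        exact Submodule.sum_mem _ fun p _ => Submodule.sum_mem _ fun q _ =>
          Submodule.smul_mem _ _ (Submodule.subset_span (hstep a j p q w hw))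
      exact hle (Submodule.mem_map_of_mem hv)
    · intro v hv
      have hle : Submodule.map G.cC (Submodule.span ℂ S) ≤ Submodule.span ℂ S := by
        rw [Submodule.map_span]
        refine Submodule.span_le.mpr ?_
        rintro y ⟨w, hw, rfl⟩
        obtain ⟨c0, h0⟩ := hw.1
        rw [h0]
        exact Submodule.smul_mem _ _ (Submodule.subset_span hw)
      exact hle (Submodule.mem_map_of_mem hv)
  -- Step 3: some graded piece is nonzero.
  have hd : ∃ d : ℤ, G.grade d ≠ ⊥ := by
    by_contra hbot
    push_neg at hbot
    have htop := G.isInternal.submodule_iSup_eq_top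
    obtain ⟨x, hx⟩ := exists_ne (0 : V)
    have hxmem : x ∈ iSup G.grade := htop ▸ Submodule.mem_top
    rw [show iSup G.grade = ⊥ by simp [hbot]] at hxmem
    exact hx ((Submodule.mem_bot ℂ).mp hxmem)
  obtain ⟨d, hd⟩ := hd
  haveI : FiniteDimensional ℂ (G.grade d) := hqf d
  haveI : Nontrivial (G.grade d) := Submodule.nontrivial_iff_ne_bot.mpr hd
  -- Step 4: Cartan operators restrict to the graded piece, and commute.
  have hDinv : ∀ x ∈ G.grade d, G.ρ 1 1 1 x ∈ G.grade d := by
    intro x hx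
    have h1 : G.ρ 1 1 1 x = ∑ p, G.ρ 1 1 (Matrix.single p p 1) x := by
      conv_lhs => rw [show (1 : Matrix (Fin N) (Fin N) ℂ) = ∑ p, Matrix.single p p 1
        from one_matrix_eq_sum N]
      rw [show G.ρ 1 1 (∑ p, Matrix.single p p (1 : ℂ))
        = ∑ p, G.ρ 1 1 (Matrix.single p p 1) from map_sum (G.toDhatModule.ρL 1 1) _ _]
      simp [LinearMap.sum_apply]
    rw [h1]
    refine Submodule.sum_mem _ fun p _ => ?_
    have hg := G.grade_ρ 1 1 p p d x hx
    rwa [show gdeg N 1 1 p p = 0 by unfold gdeg; push_cast; ring, add_zero] at hg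
  have hEinv : ∀ p : Fin N, ∀ x ∈ G.grade d,
      G.ρ 0 0 (Matrix.single p p 1) x ∈ G.grade d := by
    intro p x hx
    have hg := G.grade_ρ 0 0 p p d x hx
    rwa [show gdeg N 0 0 p p = 0 by unfold gdeg; push_cast; ring, add_zero] at hg
  set origs : Fin (N + 2) → Module.End ℂ V :=
    Fin.cons G.cC (Fin.cons (G.ρ 1 1 1)
      (fun p : Fin N => G.ρ 0 0 (Matrix.single p p 1))) with horigs
  have hinv : ∀ i, ∀ x ∈ G.grade d, origs i x ∈ G.grade d := by
    intro i
    refine Fin.cases ?_ (fun i => ?_) i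
    · simpa only [horigs, Fin.cons_zero] using G.grade_cC d
    · refine Fin.cases ?_ (fun p => ?_) i
      · simpa only [horigs, Fin.cons_succ, Fin.cons_zero] using hDinv
      · simpa only [horigs, Fin.cons_succ] using hEinv p
  have key : ∀ i, Commute G.cC (origs i) ∧ Commute (G.ρ 1 1 1) (origs i) ∧
      ∀ p : Fin N, Commute (G.ρ 0 0 (Matrix.single p p 1)) (origs i) := by
    intro i
    refine Fin.cases ?_ (fun i => ?_) i
    · refine ⟨?_, ?_, fun p => ?_⟩ <;> simp only [horigs, Fin.cons_zero]
      · exact Commute.refl _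
      · exact (G.toDhatModule.commute_cC 1 1 1).symm
      · exact (G.toDhatModule.commute_cC 0 0 _).symm
    · refine Fin.cases ?_ (fun p => ?_) i
      · refine ⟨?_, ?_, fun p => ?_⟩ <;> simp only [horigs, Fin.cons_succ, Fin.cons_zero]
        · exact G.toDhatModule.commute_cC 1 1 1
        · exact Commute.refl _
        · exact (G.toDhatModule.commute_D_ρ00 _).symm
      · refine ⟨?_, ?_, fun q => ?_⟩ <;> simp only [horigs, Fin.cons_succ]
        · exact G.toDhatModule.commute_cC 0 0 _
        · exact G.toDhatModule.commute_D_ρ00 _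
        · exact G.toDhatModule.commute_E_E q p
  have hcomm : ∀ i i', Commute (origs i) (origs i') := by
    intro i i'
    refine Fin.cases ?_ (fun i => ?_) i
    · simpa only [horigs, Fin.cons_zero] using (key i').1
    · refine Fin.cases ?_ (fun p => ?_) i
      · simpa only [horigs, Fin.cons_succ, Fin.cons_zero] using (key i').2.1
      · simpa only [horigs, Fin.cons_succ] using (key i').2.2 p
  -- Step 5: common eigenvector gives a nonzero weight vector.
  obtain ⟨v, hvne, heig⟩ := exists_common_eigen (N + 2) (G.grade d)
    (fun i => (origs i).restrict (hinv i))
    (fun i i' => restrict_commute (hcomm i i') (hinv i) (hinv i'))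
  have hgen : ∀ i : Fin (N + 2), ∃ c : ℂ, origs i (v : V) = c • (v : V) := by
    intro i
    obtain ⟨c, hc⟩ := heig i
    refine ⟨c, ?_⟩
    have hc2 := congrArg Subtype.val hc
    simpa [LinearMap.restrict_coe_apply] using hc2
  have hvmem : (v : V) ∈ S := by
    refine ⟨?_, ?_, fun p => ?_⟩
    · simpa only [horigs, Fin.cons_zero] using hgen 0
    · simpa only [horigs, Fin.cons_succ, Fin.cons_zero] using hgen (Fin.succ 0)
    · simpa only [horigs, Fin.cons_succ] using hgen (Fin.succ (Fin.succ p))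
  have hne : Submodule.span ℂ S ≠ ⊥ := by
    intro hbot
    have hmem : (v : V) ∈ Submodule.span ℂ S := Submodule.subset_span hvmem
    rw [hbot, Submodule.mem_bot] at hmem
    exact hvne (Subtype.ext hmem)
  refine ⟨hsub, hne, fun hirr => ?_⟩
  rcases hirr.2 _ hsub with h | h
  · exact absurd h hne
  · exact h
end
end
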